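/- arXiv:2506.18441 — 3 statements merged into one kernel-verified Lean document; each statement's English description precedes it below -/
import Mathlib

section
/- Let Ψ be a frame for a Hilbert space H with Gram matrix G_Ψ = C_Ψ D_Ψ and canonical dual frame Ψ̃. Then G_{Ψ,Ψ̃} = G_Ψ† G_Ψ and G_{Ψ̃} = (G_Ψ†)² G_Ψ, where G_Ψ† denotes the Moore–Penrose pseudo-inverse of G_Ψ on ℓ²(K). -/
/-!
The synthesis operator `D` of `Ψ` is the adjoint of its analysis operator `C`, so with
`S = C† C` and `G = C C†` the dual frame has analysis operator `C S⁻¹` and synthesis operator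
`S⁻¹ C†`. Both identities therefore reduce to `G' C = C S⁻¹` for the pseudo-inverse `G'` of `G`.
Since `G' G` is self-adjoint, taking adjoints in `G G' G = G` gives `G' G G = G`, i.e.
`G' C S C† = C C†`; composing on the right with `C S⁻¹` yields `G' C S = C`.
-/

open scoped InnerProductSpace InnerProduct

theorem IsSelfAdjoint.of_mul_eq_one {R : Type*} [Monoid R] [StarMul R] {a b : R}
    (ha : IsSelfAdjoint a) (h : a * b = 1) : IsSelfAdjoint b := by
  have hb : star b * a = 1 := by rw [← ha.star_eq, ← star_mul, h, star_one]
  calc star b = star b * (a * b) := by rw [h, mul_one]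
    _ = b := by rw [← mul_assoc, hb, one_mul]

namespace ContinuousLinearMap

variable {𝕜 K E F : Type*} [RCLike 𝕜]
  [NormedAddCommGroup E] [InnerProductSpace 𝕜 E] [NormedAddCommGroup F] [InnerProductSpace 𝕜 F]

theorem eq_adjoint_of_hasSum_smul [CompleteSpace E] (ψ : K → E)
    (C : E →L[𝕜] lp (fun _ : K => 𝕜) 2) (D : lp (fun _ : K => 𝕜) 2 →L[𝕜] E)
    (hC : ∀ f k, C f k = ⟪ψ k, f⟫_𝕜) (hD : ∀ c, HasSum (fun k => c k • ψ k) (D c)) :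
    D = C† := by
  suffices C = D† by rw [this, adjoint_adjoint]
  rw [eq_adjoint_iff]
  intro f c
  refine (lp.hasSum_inner (C f) c).unique ?_
  convert (hD c).mapL (innerSL 𝕜 f) using 1
  · funext k
    rw [innerSL_apply_apply, inner_smul_right, hC, RCLike.inner_apply, inner_conj_symm, mul_comm]
  · rfl

theorem eq_comp_of_hasSum_smul (ψ : K → E) (T : E →L[𝕜] F)
    (D : lp (fun _ : K => 𝕜) 2 →L[𝕜] E) (D' : lp (fun _ : K => 𝕜) 2 →L[𝕜] F)
    (hD : ∀ c, HasSum (fun k => c k • ψ k) (D c))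
    (hD' : ∀ c, HasSum (fun k => c k • T (ψ k)) (D' c)) :
    D' = T ∘L D := by
  ext1 c
  refine (hD' c).unique ?_
  simpa using (hD c).mapL T

theorem eq_comp_adjoint_of_apply_eq_inner [CompleteSpace E] [CompleteSpace F]
    (ψ : K → E) (T : E →L[𝕜] F)
    (C : E →L[𝕜] lp (fun _ : K => 𝕜) 2) (C' : F →L[𝕜] lp (fun _ : K => 𝕜) 2)
    (hC : ∀ f k, C f k = ⟪ψ k, f⟫_𝕜) (hC' : ∀ f k, C' f k = ⟪T (ψ k), f⟫_𝕜) :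
    C' = C ∘L T† := by
  ext f k
  rw [hC', comp_apply, hC, adjoint_inner_right]

theorem pinv_comp_eq_comp_inv [CompleteSpace E] [CompleteSpace F]
    (C : E →L[𝕜] F) (G' : F →L[𝕜] F) (S' : E →L[𝕜] E)
    (hG'₁ : (C ∘L C†) ∘L (G' ∘L (C ∘L C†)) = C ∘L C†)
    (hG'₄ : (G' ∘L (C ∘L C†))† = G' ∘L (C ∘L C†))
    (hS' : (C† ∘L C) ∘L S' = ContinuousLinearMap.id 𝕜 E) :
    G' ∘L C = C ∘L S' := by
  have hG'G : (G' ∘L (C ∘L C†)) ∘L (C ∘L C†) = C ∘L C† := by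
    simpa only [adjoint_comp, adjoint_adjoint, hG'₄] using congrArg adjoint hG'₁
  have hS'x (x : E) : (C†) (C (S' x)) = x := congr($hS' x)
  have hcancel (x : E) : G' (C ((C†) (C x))) = C x := by
    simpa only [comp_apply, hS'x] using congr($hG'G (C (S' x)))
  ext x
  simpa only [comp_apply, hS'x] using hcancel (S' x)

end ContinuousLinearMap

open ContinuousLinearMap in
theorem gram_pseudoinverse_identities_general {K : Type*}
    {H : Type*} [NormedAddCommGroup H] [InnerProductSpace ℂ H] [CompleteSpace H]
    (ψ : K → H)
    -- analysis and synthesis operators of Ψ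
    (C : H →L[ℂ] lp (fun _ : K => ℂ) 2) (D : lp (fun _ : K => ℂ) 2 →L[ℂ] H)
    (hC : ∀ (f : H) (k : K), C f k = ⟪ψ k, f⟫_ℂ)
    (hD : ∀ c : lp (fun _ : K => ℂ) 2, HasSum (fun k => c k • ψ k) (D c))
    -- inverse frame operator, canonical dual frame ψ̃_k = S' (ψ k)
    (S' : H →L[ℂ] H)
    (hS'r : (D.comp C).comp S' = ContinuousLinearMap.id ℂ H)
    -- analysis and synthesis operators of the canonical dual frame Ψ̃
    (Ct : H →L[ℂ] lp (fun _ : K => ℂ) 2) (Dt : lp (fun _ : K => ℂ) 2 →L[ℂ] H)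
    (hCt : ∀ (f : H) (k : K), Ct f k = ⟪S' (ψ k), f⟫_ℂ)
    (hDt : ∀ c : lp (fun _ : K => ℂ) 2, HasSum (fun k => c k • S' (ψ k)) (Dt c))
    -- the Moore–Penrose pseudo-inverse G† of the Gram matrix G = C D
    (Gd : lp (fun _ : K => ℂ) 2 →L[ℂ] lp (fun _ : K => ℂ) 2)
    (hGd1 : (C.comp D).comp (Gd.comp (C.comp D)) = C.comp D)
    (hGd4 : ContinuousLinearMap.adjoint (Gd.comp (C.comp D)) = Gd.comp (C.comp D)) :
    -- G_{Ψ,Ψ̃} = G† G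
    C.comp Dt = Gd.comp (C.comp D) ∧
    -- G_{Ψ̃} = (G†)² G
    Ct.comp Dt = Gd.comp (Gd.comp (C.comp D)) := by
  have hD_eq : D = C† := eq_adjoint_of_hasSum_smul ψ C D hC hD
  subst hD_eq
  have hS'_sa : S'† = S' := by
    have hS : IsSelfAdjoint (C† ∘L C) := by
      rw [IsSelfAdjoint, star_eq_adjoint, adjoint_comp, adjoint_adjoint]
    simpa only [IsSelfAdjoint, star_eq_adjoint] using hS.of_mul_eq_one hS'r
  have hDt_eq : Dt = S' ∘L C† := eq_comp_of_hasSum_smul ψ S' (C†) Dt hD hDt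
  have hCt_eq : Ct = C ∘L S' := by
    simpa only [hS'_sa] using eq_comp_adjoint_of_apply_eq_inner ψ S' C Ct hC hCt
  have hGdC : Gd ∘L C = C ∘L S' := pinv_comp_eq_comp_inv C Gd S' hGd1 hGd4 hS'r
  subst hDt_eq hCt_eq
  simp only [← comp_assoc, hGdC, and_self]

theorem gram_pseudoinverse_identities {K : Type*} [Countable K]
    {H : Type*} [NormedAddCommGroup H] [InnerProductSpace ℂ H] [CompleteSpace H]
    (ψ : K → H) (A B : ℝ) (hA : 0 < A) (hB : 0 < B)
    (hsum : ∀ f : H, Summable fun k => ‖⟪ψ k, f⟫_ℂ‖ ^ 2)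
    (hframe : ∀ f : H,
      A * ‖f‖ ^ 2 ≤ ∑' k, ‖⟪ψ k, f⟫_ℂ‖ ^ 2 ∧ ∑' k, ‖⟪ψ k, f⟫_ℂ‖ ^ 2 ≤ B * ‖f‖ ^ 2)
    -- analysis and synthesis operators of Ψ
    (C : H →L[ℂ] lp (fun _ : K => ℂ) 2) (D : lp (fun _ : K => ℂ) 2 →L[ℂ] H)
    (hC : ∀ (f : H) (k : K), C f k = ⟪ψ k, f⟫_ℂ)
    (hD : ∀ c : lp (fun _ : K => ℂ) 2, HasSum (fun k => c k • ψ k) (D c))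
    -- inverse frame operator, canonical dual frame ψ̃_k = S' (ψ k)
    (S' : H →L[ℂ] H)
    (hS'l : S'.comp (D.comp C) = ContinuousLinearMap.id ℂ H)
    (hS'r : (D.comp C).comp S' = ContinuousLinearMap.id ℂ H)
    -- analysis and synthesis operators of the canonical dual frame Ψ̃
    (Ct : H →L[ℂ] lp (fun _ : K => ℂ) 2) (Dt : lp (fun _ : K => ℂ) 2 →L[ℂ] H)
    (hCt : ∀ (f : H) (k : K), Ct f k = ⟪S' (ψ k), f⟫_ℂ)
    (hDt : ∀ c : lp (fun _ : K => ℂ) 2, HasSum (fun k => c k • S' (ψ k)) (Dt c))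
    -- the Moore–Penrose pseudo-inverse G† of the Gram matrix G = C D
    (Gd : lp (fun _ : K => ℂ) 2 →L[ℂ] lp (fun _ : K => ℂ) 2)
    (hGd1 : (C.comp D).comp (Gd.comp (C.comp D)) = C.comp D)
    (hGd2 : Gd.comp ((C.comp D).comp Gd) = Gd)
    (hGd3 : ContinuousLinearMap.adjoint ((C.comp D).comp Gd) = (C.comp D).comp Gd)
    (hGd4 : ContinuousLinearMap.adjoint (Gd.comp (C.comp D)) = Gd.comp (C.comp D)) :
    -- G_{Ψ,Ψ̃} = G† G
    C.comp Dt = Gd.comp (C.comp D) ∧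
    -- G_{Ψ̃} = (G†)² G
    Ct.comp Dt = Gd.comp (Gd.comp (C.comp D)) :=
  gram_pseudoinverse_identities_general ψ C D hC hD S' hS'r Ct Dt hCt hDt Gd hGd1 hGd4
end

section
/- Let A be a Banach *-algebra of matrices over an index set K such that (ARI1) every A ∈ 𝒜 acts boundedly on ℓ^p_w(K) for all 1 ≤ p ≤ ∞ and all weights w in an admissible class W containing the constant weight and closed under w ↦ 1/w, and (ARI2) 𝒜 is inverse-closed in B(ℓ²(K)). Let μ ∈ W and let B be a matrix such that B^μ := D_μ B D_{1/μ} ∈ 𝒜 and B is invertible on ℓ²_μ(K). Then for every 1 ≤ p ≤ ∞ and every w ∈ W, the operator B is bounded and invertible on ℓ^p_{μw}(K), with inverse D_{1/μ}(B^μ)^{-1}D_μ. -/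
/-!
Conjugation by `D_μ` identifies `ℓ^p_{μw}` isometrically with `ℓ^p_w`, so `B` is bounded on
`ℓ^p_{μw}` exactly when `B^μ = D_μ B D_{1/μ}` is bounded on `ℓ^p_w`. Applied to `B⁻¹` with `p = 2`,
`w = 1`, this makes `(B^μ)⁻¹ = D_μ B⁻¹ D_{1/μ}` bounded on `ℓ²`, so it lies in `𝒜` by
inverse-closedness (ARI2); then (ARI1) bounds both `B^μ` and `(B^μ)⁻¹` on every `ℓ^p_w`, and
conjugating back gives the claim, since `D_{1/μ} (B^μ)⁻¹ D_μ = B⁻¹`.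
-/

open scoped ENNReal NNReal

-- The weighted `ℓ^p_w`-norm (with values in `ℝ≥0∞`), for `1 ≤ p ≤ ∞`.
noncomputable def wnorm {K : Type*} (p : ℝ≥0∞) (w : K → ℝ) (c : K → ℂ) : ℝ≥0∞ :=
  if p = ∞ then ⨆ k, ((‖c k‖₊ * ‖w k‖₊ : ℝ≥0) : ℝ≥0∞)
  else (∑' k, ((‖c k‖₊ * ‖w k‖₊ : ℝ≥0) : ℝ≥0∞) ^ p.toReal) ^ (1 / p.toReal)

-- The diagonal operator `D_μ`.
def diagOp {K : Type*} (μ : K → ℝ) : (K → ℂ) →ₗ[ℂ] (K → ℂ) where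
  toFun c := fun k => (μ k : ℂ) * c k
  map_add' c d := by funext k; simp [mul_add]
  map_smul' a c := by funext k; simp [smul_eq_mul]; ring

section Weighted

variable {K : Type*}

/-- The matrix `B^μ = D_μ B D_{1/μ}`. -/
noncomputable def diagConj (μ : K → ℝ) (T : (K → ℂ) →ₗ[ℂ] (K → ℂ)) : (K → ℂ) →ₗ[ℂ] (K → ℂ) :=
  diagOp μ ∘ₗ T ∘ₗ diagOp fun k => (μ k)⁻¹

def IsBoundedOn (p : ℝ≥0∞) (w : K → ℝ) (T : (K → ℂ) →ₗ[ℂ] (K → ℂ)) : Prop :=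
  ∃ Cb : ℝ≥0, ∀ c : K → ℂ, wnorm p w (T c) ≤ Cb * wnorm p w c

theorem diagConj_def (μ : K → ℝ) (T : (K → ℂ) →ₗ[ℂ] (K → ℂ)) :
    diagConj μ T = diagOp μ ∘ₗ T ∘ₗ diagOp fun k => (μ k)⁻¹ :=
  rfl

theorem diagOp_comp_diagOp (μ ν : K → ℝ) :
    diagOp μ ∘ₗ diagOp ν = diagOp fun k => μ k * ν k := by
  ext c k
  simp [diagOp, mul_assoc]

theorem diagOp_one : diagOp (fun _ : K => (1 : ℝ)) = LinearMap.id := by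
  ext c k
  simp [diagOp]

variable {μ : K → ℝ}

theorem diagOp_inv_comp_diagOp (hμ : ∀ k, μ k ≠ 0) :
    (diagOp fun k => (μ k)⁻¹) ∘ₗ diagOp μ = LinearMap.id := by
  rw [diagOp_comp_diagOp]
  simp_rw [inv_mul_cancel₀ (hμ _)]
  exact diagOp_one

theorem diagOp_comp_diagOp_inv (hμ : ∀ k, μ k ≠ 0) :
    diagOp μ ∘ₗ (diagOp fun k => (μ k)⁻¹) = LinearMap.id := by
  rw [diagOp_comp_diagOp]
  simp_rw [mul_inv_cancel₀ (hμ _)]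
  exact diagOp_one

theorem diagOp_surjective (hμ : ∀ k, μ k ≠ 0) : Function.Surjective (diagOp μ) :=
  fun d => ⟨diagOp (fun k => (μ k)⁻¹) d, LinearMap.congr_fun (diagOp_comp_diagOp_inv hμ) d⟩

theorem diagConj_comp (hμ : ∀ k, μ k ≠ 0) (S T : (K → ℂ) →ₗ[ℂ] (K → ℂ)) :
    diagConj μ (S ∘ₗ T) = diagConj μ S ∘ₗ diagConj μ T := by
  simp only [diagConj, LinearMap.comp_assoc]
  rw [← LinearMap.comp_assoc _ (diagOp μ) (diagOp fun k => (μ k)⁻¹),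
    diagOp_inv_comp_diagOp hμ, LinearMap.id_comp]

theorem diagConj_id (hμ : ∀ k, μ k ≠ 0) : diagConj μ LinearMap.id = LinearMap.id := by
  rw [diagConj, LinearMap.id_comp, diagOp_comp_diagOp_inv hμ]

theorem diagConj_comp_diagOp (hμ : ∀ k, μ k ≠ 0) (T : (K → ℂ) →ₗ[ℂ] (K → ℂ)) :
    diagConj μ T ∘ₗ diagOp μ = diagOp μ ∘ₗ T := by
  rw [diagConj, LinearMap.comp_assoc, LinearMap.comp_assoc, diagOp_inv_comp_diagOp hμ,
    LinearMap.comp_id]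

theorem diagOp_inv_comp_diagConj_comp (hμ : ∀ k, μ k ≠ 0) (T : (K → ℂ) →ₗ[ℂ] (K → ℂ)) :
    (diagOp fun k => (μ k)⁻¹) ∘ₗ diagConj μ T ∘ₗ diagOp μ = T := by
  rw [diagConj_comp_diagOp hμ, ← LinearMap.comp_assoc, diagOp_inv_comp_diagOp hμ,
    LinearMap.id_comp]

theorem wnorm_diagOp (p : ℝ≥0∞) (μ w : K → ℝ) (c : K → ℂ) :
    wnorm p w (diagOp μ c) = wnorm p (fun k => μ k * w k) c := by
  have hk : ∀ k, (‖diagOp μ c k‖₊ * ‖w k‖₊ : ℝ≥0) = ‖c k‖₊ * ‖μ k * w k‖₊ := fun k => by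
    simp only [diagOp, LinearMap.coe_mk, AddHom.coe_mk, nnnorm_mul, Complex.nnnorm_real]
    ring
  simp only [wnorm, hk]

theorem isBoundedOn_mul_weight_iff (hμ : ∀ k, μ k ≠ 0) (p : ℝ≥0∞) (w : K → ℝ)
    (T : (K → ℂ) →ₗ[ℂ] (K → ℂ)) :
    IsBoundedOn p (fun k => μ k * w k) T ↔ IsBoundedOn p w (diagConj μ T) := by
  refine exists_congr fun Cb => ?_
  conv_rhs => rw [(diagOp_surjective hμ).forall]
  refine forall_congr' fun c => ?_
  rw [← LinearMap.comp_apply, diagConj_comp_diagOp hμ, LinearMap.comp_apply, wnorm_diagOp,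
    wnorm_diagOp]

end Weighted

theorem ari_lifting_invertibility_general {K : Type*}
    (W : Set (K → ℝ)) (hWpos : ∀ w ∈ W, ∀ k, 0 < w k)
    (𝒜 : Set ((K → ℂ) →ₗ[ℂ] (K → ℂ)))
    -- (ARI1) every A ∈ 𝒜 acts boundedly on ℓ^p_w for all 1 ≤ p ≤ ∞, w ∈ W
    (hARI1 : ∀ A ∈ 𝒜, ∀ p : ℝ≥0∞, 1 ≤ p → ∀ w ∈ W,
      ∃ Cb : ℝ≥0, ∀ c : K → ℂ, wnorm p w (A c) ≤ Cb * wnorm p w c)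
    -- (ARI2) 𝒜 is inverse-closed in B(ℓ²(K))
    (hARI2 : ∀ A ∈ 𝒜, ∀ A' : (K → ℂ) →ₗ[ℂ] (K → ℂ),
      A ∘ₗ A' = LinearMap.id → A' ∘ₗ A = LinearMap.id →
      (∃ Cb : ℝ≥0, ∀ c : K → ℂ,
        wnorm 2 (fun _ => 1) (A' c) ≤ Cb * wnorm 2 (fun _ => 1) c) →
      A' ∈ 𝒜)
    (μ : K → ℝ) (hμW : μ ∈ W)
    (B Binv : (K → ℂ) →ₗ[ℂ] (K → ℂ))
    -- B^μ := D_μ B D_{1/μ} ∈ 𝒜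
    (hBμ : (diagOp μ) ∘ₗ B ∘ₗ (diagOp fun k => (μ k)⁻¹) ∈ 𝒜)
    -- B is invertible on ℓ²_μ (with inverse Binv, both bounded in the ℓ²_μ norm)
    (hBl : B ∘ₗ Binv = LinearMap.id) (hBr : Binv ∘ₗ B = LinearMap.id)
    (hBinvbd : ∃ Cb : ℝ≥0, ∀ c : K → ℂ, wnorm 2 μ (Binv c) ≤ Cb * wnorm 2 μ c) :
    ∀ p : ℝ≥0∞, 1 ≤ p → ∀ w ∈ W,
      -- B is bounded on ℓ^p_{μw}
      (∃ Cb : ℝ≥0, ∀ c : K → ℂ,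
        wnorm p (fun k => μ k * w k) (B c) ≤ Cb * wnorm p (fun k => μ k * w k) c) ∧
      -- the operator D_{1/μ} (B^μ)⁻¹ D_μ is a two-sided inverse of B ...
      (B ∘ₗ ((diagOp fun k => (μ k)⁻¹) ∘ₗ
          ((diagOp μ) ∘ₗ Binv ∘ₗ (diagOp fun k => (μ k)⁻¹)) ∘ₗ (diagOp μ))
        = LinearMap.id ∧
       ((diagOp fun k => (μ k)⁻¹) ∘ₗ
          ((diagOp μ) ∘ₗ Binv ∘ₗ (diagOp fun k => (μ k)⁻¹)) ∘ₗ (diagOp μ)) ∘ₗ B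
        = LinearMap.id) ∧
      -- ... which is also bounded on ℓ^p_{μw}
      (∃ Cb : ℝ≥0, ∀ c : K → ℂ,
        wnorm p (fun k => μ k * w k)
            (((diagOp fun k => (μ k)⁻¹) ∘ₗ
              ((diagOp μ) ∘ₗ Binv ∘ₗ (diagOp fun k => (μ k)⁻¹)) ∘ₗ (diagOp μ)) c)
          ≤ Cb * wnorm p (fun k => μ k * w k) c) := by
  intro p hp w hw
  have hμ : ∀ k, μ k ≠ 0 := fun k => (hWpos μ hμW k).ne'
  have hBμBinvμ : diagConj μ B ∘ₗ diagConj μ Binv = LinearMap.id := by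
    rw [← diagConj_comp hμ, hBl, diagConj_id hμ]
  have hBinvμBμ : diagConj μ Binv ∘ₗ diagConj μ B = LinearMap.id := by
    rw [← diagConj_comp hμ, hBr, diagConj_id hμ]
  have hBinvμ_l2 : IsBoundedOn 2 (fun _ => 1) (diagConj μ Binv) :=
    (isBoundedOn_mul_weight_iff hμ 2 _ Binv).1 (by simpa only [IsBoundedOn, mul_one] using hBinvbd)
  have hBinvμ : diagConj μ Binv ∈ 𝒜 := hARI2 _ hBμ _ hBμBinvμ hBinvμBμ hBinvμ_l2
  rw [← diagConj_def μ Binv, diagOp_inv_comp_diagConj_comp hμ]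
  exact ⟨(isBoundedOn_mul_weight_iff hμ p w B).2 (hARI1 _ hBμ p hp w hw), ⟨hBl, hBr⟩,
    (isBoundedOn_mul_weight_iff hμ p w Binv).2 (hARI1 _ hBinvμ p hp w hw)⟩

theorem ari_lifting_invertibility {K : Type*} [Countable K]
    (W : Set (K → ℝ)) (hWpos : ∀ w ∈ W, ∀ k, 0 < w k)
    (hW1 : (fun _ => (1 : ℝ)) ∈ W)
    (hWinv : ∀ w ∈ W, (fun k => (w k)⁻¹) ∈ W)
    (𝒜 : Set ((K → ℂ) →ₗ[ℂ] (K → ℂ)))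
    (h𝒜mul : ∀ A ∈ 𝒜, ∀ A' ∈ 𝒜, A ∘ₗ A' ∈ 𝒜)
    -- (ARI1) every A ∈ 𝒜 acts boundedly on ℓ^p_w for all 1 ≤ p ≤ ∞, w ∈ W
    (hARI1 : ∀ A ∈ 𝒜, ∀ p : ℝ≥0∞, 1 ≤ p → ∀ w ∈ W,
      ∃ Cb : ℝ≥0, ∀ c : K → ℂ, wnorm p w (A c) ≤ Cb * wnorm p w c)
    -- (ARI2) 𝒜 is inverse-closed in B(ℓ²(K))
    (hARI2 : ∀ A ∈ 𝒜, ∀ A' : (K → ℂ) →ₗ[ℂ] (K → ℂ),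
      A ∘ₗ A' = LinearMap.id → A' ∘ₗ A = LinearMap.id →
      (∃ Cb : ℝ≥0, ∀ c : K → ℂ,
        wnorm 2 (fun _ => 1) (A' c) ≤ Cb * wnorm 2 (fun _ => 1) c) →
      A' ∈ 𝒜)
    (μ : K → ℝ) (hμW : μ ∈ W)
    (B Binv : (K → ℂ) →ₗ[ℂ] (K → ℂ))
    -- B^μ := D_μ B D_{1/μ} ∈ 𝒜
    (hBμ : (diagOp μ) ∘ₗ B ∘ₗ (diagOp fun k => (μ k)⁻¹) ∈ 𝒜)
    -- B is invertible on ℓ²_μ (with inverse Binv, both bounded in the ℓ²_μ norm)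
    (hBl : B ∘ₗ Binv = LinearMap.id) (hBr : Binv ∘ₗ B = LinearMap.id)
    (hBbd : ∃ Cb : ℝ≥0, ∀ c : K → ℂ, wnorm 2 μ (B c) ≤ Cb * wnorm 2 μ c)
    (hBinvbd : ∃ Cb : ℝ≥0, ∀ c : K → ℂ, wnorm 2 μ (Binv c) ≤ Cb * wnorm 2 μ c) :
    ∀ p : ℝ≥0∞, 1 ≤ p → ∀ w ∈ W,
      -- B is bounded on ℓ^p_{μw}
      (∃ Cb : ℝ≥0, ∀ c : K → ℂ,
        wnorm p (fun k => μ k * w k) (B c) ≤ Cb * wnorm p (fun k => μ k * w k) c) ∧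
      -- the operator D_{1/μ} (B^μ)⁻¹ D_μ is a two-sided inverse of B ...
      (B ∘ₗ ((diagOp fun k => (μ k)⁻¹) ∘ₗ
          ((diagOp μ) ∘ₗ Binv ∘ₗ (diagOp fun k => (μ k)⁻¹)) ∘ₗ (diagOp μ))
        = LinearMap.id ∧
       ((diagOp fun k => (μ k)⁻¹) ∘ₗ
          ((diagOp μ) ∘ₗ Binv ∘ₗ (diagOp fun k => (μ k)⁻¹)) ∘ₗ (diagOp μ)) ∘ₗ B
        = LinearMap.id) ∧
      -- ... which is also bounded on ℓ^p_{μw}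
      (∃ Cb : ℝ≥0, ∀ c : K → ℂ,
        wnorm p (fun k => μ k * w k)
            (((diagOp fun k => (μ k)⁻¹) ∘ₗ
              ((diagOp μ) ∘ₗ Binv ∘ₗ (diagOp fun k => (μ k)⁻¹)) ∘ₗ (diagOp μ)) c)
          ≤ Cb * wnorm p (fun k => μ k * w k) c) :=
  ari_lifting_invertibility_general W hWpos 𝒜 hARI1 hARI2 μ hμW B Binv hBμ hBl hBr hBinvbd
end

section
/- Fix s > d and let K = ℤ^d. The Jaffard class 𝒜_s of matrices A = (a_{kl}) satisfying |a_{kl}| ≤ C(1+|k−l|)^{−s} for all k, l, with norm the smallest such constant C, is a Banach algebra under matrix multiplication: if A, B ∈ 𝒜_s then AB ∈ 𝒜_s with ‖AB‖_{𝒜_s} ≤ C_s ‖A‖_{𝒜_s}‖B‖_{𝒜_s} for a constant C_s depending only on s and d. -/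
/-!
Write `w(k) = (1 + |k|)^{-s}`. Since `|k - l| ≤ |k - j| + |j - l|`, one of `|k - j|`, `|j - l|` is at
least `|k - l| / 2`, whence `w(k - j) w(j - l) ≤ 2^s w(k - l) (w(k - j) + w(j - l))`. Summing over `j`
bounds the convolution `∑_j w(k - j) w(j - l)` by `2^{s+1} (∑_j w(j)) w(k - l)`, and `∑_j w(j)` is
finite for `s > d` by the convergence of `p`-series over the lattice `ℤ^d ⊂ ℝ^d`. The entries of
`AB` are dominated by `C_A C_B` times this convolution.
-/

noncomputable def znorm {d : ℕ} (k : Fin d → ℤ) : ℝ :=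
  Real.sqrt (∑ i, ((k i : ℝ)) ^ 2)

open Real Module Submodule

section Lattice

variable {d : ℕ}

noncomputable def intLatticeEquiv (d : ℕ) :
    (Fin d → ℤ) ≃ₗ[ℤ] span ℤ (Set.range (EuclideanSpace.basisFun (Fin d) ℝ).toBasis) :=
  ((EuclideanSpace.basisFun (Fin d) ℝ).toBasis.restrictScalars ℤ).equivFun.symm

lemma coe_intLatticeEquiv (k : Fin d → ℤ) :
    (intLatticeEquiv d k : EuclideanSpace ℝ (Fin d)) = WithLp.toLp 2 (fun i ↦ (k i : ℝ)) := by
  ext i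
  have h := Basis.restrictScalars_repr_apply ℤ (EuclideanSpace.basisFun (Fin d) ℝ).toBasis
    (intLatticeEquiv d k) i
  rw [← Basis.equivFun_apply, intLatticeEquiv, LinearEquiv.apply_symm_apply] at h
  simpa [intLatticeEquiv] using h.symm

lemma znorm_eq_norm_intLatticeEquiv (k : Fin d → ℤ) : znorm k = ‖intLatticeEquiv d k‖ := by
  rw [Submodule.coe_norm, coe_intLatticeEquiv, EuclideanSpace.norm_eq]
  simp [znorm]

lemma znorm_nonneg (k : Fin d → ℤ) : 0 ≤ znorm k := Real.sqrt_nonneg _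

lemma znorm_sub_le (k j l : Fin d → ℤ) : znorm (k - l) ≤ znorm (k - j) + znorm (j - l) := by
  simpa only [znorm_eq_norm_intLatticeEquiv, map_sub] using norm_sub_le_norm_sub_add_norm_sub _ _ _

lemma finrank_span_basisFun :
    finrank ℤ (span ℤ (Set.range (EuclideanSpace.basisFun (Fin d) ℝ).toBasis)) = d := by
  simpa using finrank_eq_card_basis
    ((EuclideanSpace.basisFun (Fin d) ℝ).toBasis.restrictScalars ℤ)

end Lattice

lemma rpow_neg_mul_rpow_neg_le {a b c s : ℝ} (ha : 0 < a) (hb : 0 < b) (hc : 0 < c)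
    (habc : c ≤ a + b) (hs : 0 ≤ s) :
    a ^ (-s) * b ^ (-s) ≤ 2 ^ s * c ^ (-s) * (a ^ (-s) + b ^ (-s)) := by
  wlog hab : a ≤ b generalizing a b
  · simpa only [mul_comm, add_comm] using this hb ha (by linarith) (le_of_not_ge hab)
  have hb_large : b ^ (-s) ≤ 2 ^ s * c ^ (-s) :=
    calc b ^ (-s) ≤ (c / 2) ^ (-s) :=
          rpow_le_rpow_of_nonpos (by positivity) (by linarith) (neg_nonpos.mpr hs)
      _ = 2 ^ s * c ^ (-s) := by
          rw [div_rpow hc.le zero_le_two, rpow_neg zero_le_two, div_inv_eq_mul, mul_comm]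
  calc a ^ (-s) * b ^ (-s) ≤ 2 ^ s * c ^ (-s) * a ^ (-s) := by rw [mul_comm]; gcongr
    _ ≤ 2 ^ s * c ^ (-s) * (a ^ (-s) + b ^ (-s)) := by
        gcongr
        exact le_add_of_nonneg_right (by positivity)

section Weight

variable {d : ℕ} {s : ℝ}

noncomputable def polyWeight (s : ℝ) (k : Fin d → ℤ) : ℝ := (1 + znorm k) ^ (-s)

lemma polyWeight_pos (s : ℝ) (k : Fin d → ℤ) : 0 < polyWeight s k :=
  rpow_pos_of_pos (by linarith [znorm_nonneg k]) _

lemma summable_polyWeight (hs : (d : ℝ) < s) : Summable (polyWeight (d := d) s) := by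
  have h := ZLattice.summable_norm_rpow _ (-s) (by rwa [finrank_span_basisFun, neg_lt_neg_iff])
  rw [← (intLatticeEquiv d).toEquiv.summable_iff] at h
  refine Summable.of_norm_bounded_eventually h ?_
  filter_upwards [(Set.finite_singleton (0 : Fin d → ℤ)).compl_mem_cofinite] with k hk
  have hk0 : 0 < znorm k := by
    rw [znorm_eq_norm_intLatticeEquiv, norm_pos_iff, (intLatticeEquiv d).map_ne_zero_iff]
    exact hk
  rw [norm_of_nonneg (polyWeight_pos s k).le, Function.comp_apply, LinearEquiv.coe_toEquiv,
    ← znorm_eq_norm_intLatticeEquiv]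
  exact rpow_le_rpow_of_nonpos hk0 (by linarith) (by linarith [d.cast_nonneg (α := ℝ)])

lemma polyWeight_mul_polyWeight_le (hs : 0 ≤ s) (k j l : Fin d → ℤ) :
    polyWeight s (k - j) * polyWeight s (j - l) ≤
      2 ^ s * polyWeight s (k - l) * (polyWeight s (k - j) + polyWeight s (j - l)) :=
  rpow_neg_mul_rpow_neg_le (by linarith [znorm_nonneg (k - j)]) (by linarith [znorm_nonneg (j - l)])
    (by linarith [znorm_nonneg (k - l)]) (by linarith [znorm_sub_le k j l]) hs

lemma hasSum_polyWeight_majorant (hs : (d : ℝ) < s) (k l : Fin d → ℤ) :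
    HasSum (fun j ↦ 2 ^ s * polyWeight s (k - l) * (polyWeight s (k - j) + polyWeight s (j - l)))
      (2 * 2 ^ s * (∑' j : Fin d → ℤ, polyWeight s j) * polyWeight s (k - l)) := by
  have hS := (summable_polyWeight hs).hasSum
  have hleft : HasSum (fun j ↦ polyWeight s (k - j)) (∑' j : Fin d → ℤ, polyWeight s j) :=
    (Equiv.subLeft k).hasSum_iff.mpr hS
  have hright : HasSum (fun j ↦ polyWeight s (j - l)) (∑' j : Fin d → ℤ, polyWeight s j) :=
    (Equiv.subRight l).hasSum_iff.mpr hS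
  rw [show ∀ S w : ℝ, 2 * 2 ^ s * S * w = 2 ^ s * w * (S + S) from fun _ _ ↦ by ring]
  exact (hleft.add hright).mul_left _

lemma summable_polyWeight_mul_polyWeight (hs : (d : ℝ) < s) (k l : Fin d → ℤ) :
    Summable fun j ↦ polyWeight s (k - j) * polyWeight s (j - l) :=
  .of_nonneg_of_le (fun _ ↦ (mul_pos (polyWeight_pos s _) (polyWeight_pos s _)).le)
    (polyWeight_mul_polyWeight_le (d.cast_nonneg.trans hs.le) k · l)
    (hasSum_polyWeight_majorant hs k l).summable

lemma tsum_polyWeight_mul_polyWeight_le (hs : (d : ℝ) < s) (k l : Fin d → ℤ) :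
    ∑' j, polyWeight s (k - j) * polyWeight s (j - l) ≤
      2 * 2 ^ s * (∑' j : Fin d → ℤ, polyWeight s j) * polyWeight s (k - l) :=
  hasSum_le (polyWeight_mul_polyWeight_le (d.cast_nonneg.trans hs.le) k · l)
    (summable_polyWeight_mul_polyWeight hs k l).hasSum (hasSum_polyWeight_majorant hs k l)

end Weight

theorem jaffard_banach_algebra (d : ℕ) (s : ℝ) (hs : (d : ℝ) < s) :
    ∃ Cs : ℝ, 0 < Cs ∧
      ∀ (A B : (Fin d → ℤ) → (Fin d → ℤ) → ℂ) (CA CB : ℝ),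
        0 ≤ CA → 0 ≤ CB →
        (∀ k l, ‖A k l‖ ≤ CA * (1 + znorm (k - l)) ^ (-s)) →
        (∀ k l, ‖B k l‖ ≤ CB * (1 + znorm (k - l)) ^ (-s)) →
        ∀ k l, ‖∑' j, A k j * B j l‖ ≤ Cs * CA * CB * (1 + znorm (k - l)) ^ (-s) := by
  set S := ∑' j : Fin d → ℤ, polyWeight s j
  have hS : 0 < S := (summable_polyWeight hs).tsum_pos (fun j ↦ (polyWeight_pos s j).le) 0
    (polyWeight_pos s 0)
  refine ⟨2 * 2 ^ s * S, by positivity, fun A B CA CB hCA hCB hA hB k l ↦ ?_⟩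
  have hterm (j : Fin d → ℤ) :
      ‖A k j * B j l‖ ≤ CA * CB * (polyWeight s (k - j) * polyWeight s (j - l)) := by
    rw [norm_mul, mul_mul_mul_comm]
    exact mul_le_mul (hA k j) (hB j l) (norm_nonneg _) (mul_nonneg hCA (polyWeight_pos s _).le)
  calc ‖∑' j, A k j * B j l‖
      ≤ CA * CB * ∑' j, polyWeight s (k - j) * polyWeight s (j - l) :=
        tsum_of_norm_bounded ((summable_polyWeight_mul_polyWeight hs k l).hasSum.mul_left _) hterm
    _ ≤ CA * CB * (2 * 2 ^ s * S * polyWeight s (k - l)) :=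
        mul_le_mul_of_nonneg_left (tsum_polyWeight_mul_polyWeight_le hs k l) (mul_nonneg hCA hCB)
    _ = 2 * 2 ^ s * S * CA * CB * polyWeight s (k - l) := by ring
end
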